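/- arXiv:2002.11387 — 2 statements merged into one kernel-verified Lean document; each statement's English description precedes it below -/
import Mathlib

section
/- Fix a winner number k with 1 ≤ k ≤ n, a Gini cap g ∈ (0,1), and a budget profile with strictly ordered positive budgets 0 < b_1 < b_2 < … < b_n. Let z = ⌊(n−k) + (k/2)·(g + (k+1)/k)⌋. Then for every agent i with i > z, decreasing b_i by ε > 0 decreases the maximum price by at most ε: p*_k(b) − p*_k(b_i − ε, b_{−i}) ≤ ε for all sufficiently small ε > 0; equivalently, the upper one-sided Dini derivative of b_i ↦ p*_k(b_i, b_{−i}) is at most 1 for i > z. -/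
open Finset

/-- The ascending rearrangement of a vector. -/
noncomputable def sortedAsc {n : ℕ} (a : Fin n → ℝ) : Fin n → ℝ :=
  a ∘ Tuple.sort a

/-- The Gini index of an ascending-sorted nonnegative vector `y` on `Fin k`:
`2 (∑ i, i * y_i) / (k ∑ i, y_i) - (k+1)/k` (with 1-based weights). -/
noncomputable def gini {k : ℕ} (y : Fin k → ℝ) : ℝ :=
  2 * (∑ i : Fin k, (((i : ℕ) : ℝ) + 1) * y i) / (k * ∑ i, y i) - ((k : ℝ) + 1) / k

/-- The flexible Gini index with winner number `k`: the Gini index of the top `k`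
entries of the ascending rearrangement of the allocation. -/
noncomputable def flexGini {n : ℕ} (k : ℕ) (a : Fin n → ℝ) : ℝ :=
  if h : k ≤ n then
    gini (fun i : Fin k => sortedAsc a ⟨n - k + i, by have := i.isLt; omega⟩)
  else 0

/-- Feasibility of allocation `a` for budgets `b`, winner number `k`, price `p`. -/
def Feasible {n : ℕ} (b : Fin n → ℝ) (k : ℕ) (p : ℝ) (a : Fin n → ℝ) : Prop :=
  (∀ i, 0 ≤ a i) ∧ (∑ i, a i = 1) ∧ (∀ i, a i * p ≤ b i) ∧
    n - k ≤ (Finset.univ.filter fun i => a i = 0).card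

open Classical in
/-- The minimum flexible Gini index over feasible allocations (`1` if none exists). -/
noncomputable def gStar {n : ℕ} (b : Fin n → ℝ) (k : ℕ) (p : ℝ) : ℝ :=
  if ∃ a, Feasible b k p a then sInf (flexGini k '' {a | Feasible b k p a}) else 1

/-- The maximum price for winner number `k` under Gini cap `g`. -/
noncomputable def pStar {n : ℕ} (b : Fin n → ℝ) (k : ℕ) (g : ℝ) : ℝ :=
  sSup {p : ℝ | 0 < p ∧ gStar b k p ≤ g}

/-- The Gini mechanism's price: the maximum of `pStar` over allowed winner numbers. -/
noncomputable def pStarK {n : ℕ} (b : Fin n → ℝ) (K : Finset ℕ) (g : ℝ) : ℝ :=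
  sSup ((fun k => pStar b k g) '' (K : Set ℕ))

/-- The `(m+1)`-st smallest budget (0-based index `m`). -/
noncomputable def nthSmallest {n : ℕ} (b : Fin n → ℝ) (m : ℕ) : ℝ :=
  if h : m < n then sortedAsc b ⟨m, h⟩ else 0

/-- The allocation cap `C` at price `p` for winner number `k`. -/
noncomputable def capOf {n : ℕ} (b : Fin n → ℝ) (k : ℕ) (p : ℝ) : ℝ :=
  sInf {C : ℝ | 0 < C ∧
    1 ≤ ∑ i ∈ Finset.univ.filter (fun i : Fin n => n - k ≤ (i : ℕ)),
        min (sortedAsc b i / p) C}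

/-- The winner number chosen by the Gini mechanism (ties broken in favor of more winners). -/
noncomputable def mechWinnerNum {n : ℕ} (b : Fin n → ℝ) (K : Finset ℕ) (g : ℝ) : ℕ :=
  sSup {k | k ∈ K ∧ pStar b k g = pStarK b K g}

/-- The allocation of the Gini mechanism: agents in the bottom `n - k` positions (by budget)
receive `0`; the `k` winners receive `min (bᵢ/p, C)` at the mechanism price `p`. -/
noncomputable def mechAlloc {n : ℕ} (b : Fin n → ℝ) (K : Finset ℕ) (g : ℝ) : Fin n → ℝ :=
  fun i =>
    if ((Tuple.sort b).symm i : ℕ) < n - mechWinnerNum b K g then 0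
    else min (b i / pStarK b K g) (capOf b (mechWinnerNum b K g) (pStarK b K g))

/-- Agent `i`'s spending under the Gini mechanism. -/
noncomputable def spend {n : ℕ} (b : Fin n → ℝ) (K : Finset ℕ) (g : ℝ) (i : Fin n) : ℝ :=
  mechAlloc b K g i * pStarK b K g

/-- Agent `i`'s utility under the Gini mechanism when her valuation is `v`. -/
noncomputable def util {n : ℕ} (b : Fin n → ℝ) (K : Finset ℕ) (g : ℝ) (i : Fin n) (v : ℝ) : ℝ :=
  mechAlloc b K g i * (v - pStarK b K g)

/-!
Start from an allocation `a` that is feasible at price `p` and has Gini index close to the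
cap. If agent `i` cannot afford her share `aᵢ` at the lowered budget and price `p - ε`, give
her the share `c` that exhausts her new budget `bᵢ - ε`, and multiply every other share by
the factor `s ≥ 1` that restores the total to one. The other agents stay within budget, since
`s (p - ε) ≤ p`. Agent `i` now spends `bᵢ - ε ≥ bⱼ` for every `j < i`, so her sorted position
is at least `i`. The Gini index is an increasing affine function of the rank-weighted sum
`W a = ∑_q (q + 1 - (n - k)) a₍q₎`, and the transfer gives `W a' ≤ W a + (s - 1) (W a - wᵢ)`,
where `wᵢ` is the weight of position `i`. When `i > z`, every allocation whose Gini index is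
below the cap satisfies `W a ≤ wᵢ`, so `p - ε` still meets the cap for the lowered budget.
-/

open Filter Topology

section Sorting

variable {n : ℕ}

theorem sortedAsc_monotone (x : Fin n → ℝ) : Monotone (sortedAsc x) :=
  Tuple.monotone_sort x

theorem card_filter_sortedAsc_eq_zero (x : Fin n → ℝ) :
    (univ.filter fun q => sortedAsc x q = 0).card = (univ.filter fun j => x j = 0).card :=
  card_equiv (Tuple.sort x) fun q => by rw [mem_filter, mem_filter]; simp [sortedAsc]

theorem sortedAsc_eq_zero_of_lt_card {x : Fin n → ℝ} (hx : ∀ j, 0 ≤ x j) {q : Fin n}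
    (hq : (q : ℕ) < (univ.filter fun j => x j = 0).card) : sortedAsc x q = 0 := by
  by_contra hne
  have hpos : 0 < sortedAsc x q := (hx _).lt_of_ne' hne
  have hsub : (univ.filter fun q' => sortedAsc x q' = 0) ⊆ Iio q := fun q' hq' =>
    mem_Iio.2 <| lt_of_not_ge fun hle =>
      hpos.not_ge ((sortedAsc_monotone x hle).trans (mem_filter.1 hq').2.le)
  have := card_le_card hsub
  rw [card_filter_sortedAsc_eq_zero, Fin.card_Iio] at this
  omega

theorem sort_symm_lt_sort_symm {x : Fin n → ℝ} {i j : Fin n} (hji : j < i) (hx : x j ≤ x i) :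
    (Tuple.sort x).symm j < (Tuple.sort x).symm i := by
  obtain ⟨hmono, hties⟩ := Tuple.eq_sort_iff.1 (rfl : Tuple.sort x = Tuple.sort x)
  by_contra! hle
  obtain heq | hlt := hle.eq_or_lt
  · exact hji.ne ((Tuple.sort x).symm.injective heq).symm
  · have hxi : x i ≤ x j := by simpa using hmono hlt.le
    have hij : i < j := by simpa using hties _ _ hlt (by simpa using le_antisymm hxi hx)
    exact hij.not_gt hji

theorem le_sort_symm_of_forall_lt_le {x : Fin n → ℝ} {i : Fin n} (h : ∀ j < i, x j ≤ x i) :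
    i ≤ (Tuple.sort x).symm i := by
  have := card_le_card_of_injOn (s := Iio i) (t := Iio ((Tuple.sort x).symm i))
    (Tuple.sort x).symm (fun j hj => by
      simp only [Finset.coe_Iio, Set.mem_Iio] at hj ⊢
      exact sort_symm_lt_sort_symm hj (h j hj))
    (Tuple.sort x).symm.injective.injOn
  rwa [Fin.card_Iio, Fin.card_Iio] at this

theorem sum_eq_sum_top_of_eq_zero {k : ℕ} (hkn : k ≤ n) {f : Fin n → ℝ}
    (hf : ∀ q : Fin n, (q : ℕ) < n - k → f q = 0) :
    ∑ q, f q = ∑ r : Fin k, f ⟨n - k + r, by omega⟩ := by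
  rw [← (finCongr (Nat.sub_add_cancel hkn)).sum_comp, Fin.sum_univ_add]
  simp [hf]
  rfl

end Sorting

section RankWeight

variable {n : ℕ} (k : ℕ)

/-- The `q`-th smallest of `n` shares is the `(q + 1 - (n - k))`-th smallest among the top `k`. -/
def rankWeight (q : Fin n) : ℝ := (q : ℝ) + 1 + k - n

noncomputable def rankWeightedSum (x : Fin n → ℝ) : ℝ :=
  ∑ q, rankWeight k q * sortedAsc x q

theorem rankWeight_monotone : Monotone (rankWeight (n := n) k) := fun q q' h => by
  have : (q : ℝ) ≤ q' := by exact_mod_cast h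
  simp only [rankWeight]
  linarith

theorem sum_mul_comp_perm_le_rankWeightedSum (x : Fin n → ℝ) (σ : Equiv.Perm (Fin n)) :
    ∑ q, rankWeight k q * x (σ q) ≤ rankWeightedSum k x := by
  simpa [rankWeightedSum, sortedAsc] using ((rankWeight_monotone k).monovary (sortedAsc_monotone x))
    |>.sum_mul_comp_perm_le_sum_mul (σ := σ.trans (Tuple.sort x).symm)

end RankWeight

section Gini

variable {n k : ℕ} {b a : Fin n → ℝ} {p : ℝ}

theorem neg_le_flexGini {x : Fin n → ℝ} (hx : ∀ j, 0 ≤ x j) :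
    -(((k : ℝ) + 1) / k) ≤ flexGini k x := by
  rw [flexGini]
  split_ifs
  · rw [gini, neg_le_sub_iff_le_add, le_add_iff_nonneg_left]
    have hy : ∀ r, 0 ≤ sortedAsc x r := fun r => hx _
    exact div_nonneg
      (mul_nonneg zero_le_two (sum_nonneg fun r _ => mul_nonneg (by positivity) (hy _)))
      (mul_nonneg k.cast_nonneg (sum_nonneg fun r _ => hy _))
  · rw [neg_nonpos]
    positivity

theorem Feasible.flexGini_eq (hkn : k ≤ n) (ha : Feasible b k p a) :
    flexGini k a = 2 * rankWeightedSum k a / k - ((k : ℝ) + 1) / k := by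
  obtain ⟨hnn, hsum, -, hzero⟩ := ha
  have hlow (q : Fin n) (hq : (q : ℕ) < n - k) : sortedAsc a q = 0 :=
    sortedAsc_eq_zero_of_lt_card hnn (hq.trans_le hzero)
  have hW : rankWeightedSum k a =
      ∑ r : Fin k, ((r : ℝ) + 1) * sortedAsc a ⟨n - k + r, by omega⟩ := by
    rw [rankWeightedSum, sum_eq_sum_top_of_eq_zero hkn fun q hq => by rw [hlow q hq, mul_zero]]
    refine sum_congr rfl fun r _ => ?_
    simp only [rankWeight, Nat.cast_add, Nat.cast_sub hkn]
    ring
  have hS : ∑ r : Fin k, sortedAsc a ⟨n - k + r, by omega⟩ = 1 := by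
    rw [← sum_eq_sum_top_of_eq_zero hkn hlow, ← hsum]
    exact Equiv.sum_comp (Tuple.sort a) a
  rw [flexGini, dif_pos hkn, gini, hW, hS, mul_one]

theorem bddBelow_flexGini_image : BddBelow (flexGini k '' {a | Feasible b k p a}) :=
  ⟨_, by rintro _ ⟨a, ha, rfl⟩; exact neg_le_flexGini ha.1⟩

theorem Feasible.price_le_sum (ha : Feasible b k p a) : p ≤ ∑ j, b j :=
  calc p = ∑ j, a j * p := by rw [← sum_mul, ha.2.1, one_mul]
    _ ≤ ∑ j, b j := sum_le_sum fun j _ => ha.2.2.1 j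

theorem gStar_le_flexGini (ha : Feasible b k p a) : gStar b k p ≤ flexGini k a := by
  rw [gStar, if_pos ⟨a, ha⟩]
  exact csInf_le bddBelow_flexGini_image ⟨a, ha, rfl⟩

theorem exists_feasible_of_gStar_lt_one (h : gStar b k p < 1) : ∃ a, Feasible b k p a := by
  by_contra hno
  rw [gStar, if_neg hno] at h
  exact h.false

theorem exists_flexGini_lt_of_gStar_lt {c : ℝ} (h1 : gStar b k p < 1) (hc : gStar b k p < c) :
    ∃ a, Feasible b k p a ∧ flexGini k a < c := by
  have hex := exists_feasible_of_gStar_lt_one h1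
  rw [gStar, if_pos hex] at hc
  obtain ⟨_, ⟨a, ha, rfl⟩, hlt⟩ := exists_lt_of_csInf_lt (Set.Nonempty.image (flexGini k) hex) hc
  exact ⟨a, ha, hlt⟩

theorem gStar_le_of_exists_flexGini_le {b' : Fin n → ℝ} {p' g g₀ : ℝ} (hg : g < g₀) (hg1 : g < 1)
    (h : gStar b k p ≤ g)
    (htr : ∀ a, Feasible b k p a → flexGini k a < g₀ →
      ∃ a', Feasible b' k p' a' ∧ flexGini k a' ≤ flexGini k a) :
    gStar b' k p' ≤ g := by
  refine le_of_forall_gt_imp_ge_of_dense fun c hc => ?_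
  obtain ⟨a, ha, hac⟩ := exists_flexGini_lt_of_gStar_lt (h.trans_lt hg1) (h.trans_lt (lt_min hc hg))
  obtain ⟨a', ha', hle⟩ := htr a ha (hac.trans_le (min_le_right _ _))
  exact (gStar_le_flexGini ha').trans (hle.trans (hac.le.trans (min_le_left _ _)))

theorem bddAbove_setOf_gStar_le {g : ℝ} (hg : g < 1) :
    BddAbove {p | 0 < p ∧ gStar b k p ≤ g} :=
  ⟨∑ j, b j, fun _ ⟨_, hp⟩ =>
    (exists_feasible_of_gStar_lt_one (hp.trans_lt hg)).choose_spec.price_le_sum⟩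

theorem pStar_le_pStar_add {b' : Fin n → ℝ} {g ε : ℝ} (hg : g < 1) (hε : 0 ≤ ε)
    (h : ∀ p, ε < p → gStar b k p ≤ g → gStar b' k (p - ε) ≤ g) :
    pStar b k g ≤ pStar b' k g + ε := by
  have hnn : 0 ≤ pStar b' k g := Real.sSup_nonneg fun p hp => hp.1.le
  refine Real.sSup_le (fun p ⟨_, hp⟩ => ?_) (by linarith)
  rcases le_or_gt p ε with hpε | hpε
  · linarith
  · exact sub_le_iff_le_add.1 <|
      le_csSup (bddAbove_setOf_gStar_le hg) ⟨sub_pos.2 hpε, h p hpε hp⟩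

end Gini

section Transfer

variable {n k : ℕ} {b a : Fin n → ℝ} {p : ℝ} {i : Fin n} {s : ℝ}

noncomputable def transferAlloc (a : Fin n → ℝ) (i : Fin n) (s : ℝ) : Fin n → ℝ :=
  fun j => s * a j - if j = i then s - 1 else 0

@[simp]
theorem transferAlloc_self : transferAlloc a i s i = s * a i - (s - 1) := by
  simp [transferAlloc]

theorem transferAlloc_of_ne {j : Fin n} (hj : j ≠ i) : transferAlloc a i s j = s * a j := by
  simp [transferAlloc, hj]

@[simp]
theorem transferAlloc_one : transferAlloc a i 1 = a := by
  ext j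
  simp [transferAlloc]

theorem Feasible.transferAlloc_update {p' β : ℝ} (ha : Feasible b k p a) (hs : 1 ≤ s)
    (hsp : s * p' ≤ p) (hi0 : 0 ≤ transferAlloc a i s i) (hib : transferAlloc a i s i * p' ≤ β) :
    Feasible (Function.update b i β) k p' (transferAlloc a i s) := by
  obtain ⟨hnn, hsum, hbud, hzero⟩ := ha
  refine ⟨fun j => ?_, ?_, fun j => ?_, hzero.trans (card_le_card fun j hj => ?_)⟩
  · rcases eq_or_ne j i with rfl | hj
    · exact hi0
    · rw [transferAlloc_of_ne hj]
      exact mul_nonneg (by linarith) (hnn j)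
  · simp only [transferAlloc, sum_sub_distrib, ← mul_sum, hsum, sum_ite_eq', mem_univ,
      if_true]
    ring
  · rcases eq_or_ne j i with rfl | hj
    · rwa [Function.update_self]
    · rw [transferAlloc_of_ne hj, Function.update_of_ne hj]
      calc s * a j * p' = a j * (s * p') := by ring
        _ ≤ a j * p := mul_le_mul_of_nonneg_left hsp (hnn j)
        _ ≤ b j := hbud j
  · simp only [mem_filter, mem_univ, true_and] at hj ⊢
    rcases eq_or_ne j i with rfl | hji
    · rw [transferAlloc_self, hj] at hi0 ⊢
      linarith
    · rw [transferAlloc_of_ne hji, hj, mul_zero]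

theorem rankWeightedSum_transferAlloc_le (hs : 1 ≤ s)
    (hlow : ∀ j < i, transferAlloc a i s j ≤ transferAlloc a i s i)
    (hW : rankWeightedSum k a ≤ rankWeight k i) :
    rankWeightedSum k (transferAlloc a i s) ≤ rankWeightedSum k a := by
  set σ := Tuple.sort (transferAlloc a i s)
  have hsplit : rankWeightedSum k (transferAlloc a i s) =
      s * ∑ q, rankWeight k q * a (σ q) - rankWeight k (σ.symm i) * (s - 1) := by
    simp only [rankWeightedSum, sortedAsc, Function.comp_apply, transferAlloc, mul_sub,
      sum_sub_distrib, mul_sum, ← Equiv.eq_symm_apply, mul_ite, mul_zero,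
      sum_ite_eq', mem_univ, if_true]
    congr 1
    exact sum_congr rfl fun q _ => by ring
  have hrank : rankWeight k i ≤ rankWeight k (σ.symm i) :=
    rankWeight_monotone k (le_sort_symm_of_forall_lt_le hlow)
  have hre := sum_mul_comp_perm_le_rankWeightedSum k a σ
  rw [hsplit]
  nlinarith [mul_le_mul_of_nonneg_left hre (by linarith : (0 : ℝ) ≤ s),
    mul_le_mul_of_nonneg_right hrank (by linarith : (0 : ℝ) ≤ s - 1),
    mul_le_mul_of_nonneg_right hW (by linarith : (0 : ℝ) ≤ s - 1)]

theorem Feasible.exists_update_sub {ε : ℝ} (ha : Feasible b k p a) (hε : 0 ≤ ε) (hεp : ε < p)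
    (hεb : ε ≤ b i) (hbi : ∀ j < i, b j ≤ b i - ε) (hW : rankWeightedSum k a ≤ rankWeight k i) :
    ∃ a', Feasible (Function.update b i (b i - ε)) k (p - ε) a' ∧
      rankWeightedSum k a' ≤ rankWeightedSum k a := by
  have hpε : 0 < p - ε := sub_pos.2 hεp
  by_cases hai : a i * (p - ε) ≤ b i - ε
  · refine ⟨a, ?_, le_rfl⟩
    simpa using
      ha.transferAlloc_update (i := i) le_rfl (by linarith) (by simpa using ha.1 i) (by simpa)
  rw [not_le] at hai
  set c := (b i - ε) / (p - ε)
  have hc : c * (p - ε) = b i - ε := div_mul_cancel₀ _ hpε.ne'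
  have hc0 : 0 ≤ c := div_nonneg (sub_nonneg.2 hεb) hpε.le
  have hca : c < a i := lt_of_mul_lt_mul_right (hc ▸ hai) hpε.le
  have hai1 : a i < 1 := by nlinarith [ha.2.2.1 i]
  set s := (1 - c) / (1 - a i)
  have hs : s * (1 - a i) = 1 - c := div_mul_cancel₀ _ (sub_pos.2 hai1).ne'
  have hs1 : 1 ≤ s := (one_le_div (sub_pos.2 hai1)).2 (by linarith)
  have hsi : transferAlloc a i s i = c := by rw [transferAlloc_self]; linarith
  have hsp : s * (p - ε) ≤ p := le_of_mul_le_mul_right (by nlinarith [ha.2.2.1 i]) (sub_pos.2 hai1)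
  have hfeas := ha.transferAlloc_update hs1 hsp (hsi ▸ hc0) (by rw [hsi, hc])
  refine ⟨_, hfeas, rankWeightedSum_transferAlloc_le hs1 (fun j hj => ?_) hW⟩
  have hbud := hfeas.2.2.1 j
  rw [Function.update_of_ne hj.ne] at hbud
  exact le_of_mul_le_mul_right (by rw [hsi, hc]; linarith [hbi j hj]) hpε

end Transfer

theorem StrictMono.eventually_forall_lt_le_sub {ι : Type*} [LinearOrder ι] [Finite ι]
    {b : ι → ℝ} (hb : StrictMono b) (i : ι) : ∀ᶠ ε in 𝓝 0, ∀ j < i, b j ≤ b i - ε := by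
  refine eventually_all.2 fun j => ?_
  by_cases hji : j < i
  · filter_upwards [eventually_le_nhds (sub_pos.2 (hb hji))] with ε hε _
    linarith
  · exact Eventually.of_forall fun _ h => absurd h hji

/-- With strictly ordered positive budgets, let
`z = ⌊(n-k) + (k/2)·(g + (k+1)/k)⌋`. For every agent `i` with (1-based) index `> z`,
decreasing `bᵢ` by a sufficiently small `ε > 0` decreases the maximum price by at most `ε`:
`p*_k(b) - p*_k(bᵢ - ε, b₋ᵢ) ≤ ε`. -/
theorem pStar_dini_bound_high_agents {n : ℕ} (g : ℝ) (hg : g ∈ Set.Ioo (0 : ℝ) 1)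
    (b : Fin n → ℝ) (hmono : StrictMono b) (hpos : ∀ j, 0 < b j)
    (k : ℕ) (hk1 : 1 ≤ k) (hkn : k ≤ n) (i : Fin n)
    (hi : ⌊((n : ℝ) - k) + ((k : ℝ) / 2) * (g + ((k : ℝ) + 1) / k)⌋ < ((i : ℕ) : ℤ) + 1) :
    ∀ᶠ ε in nhdsWithin (0 : ℝ) (Set.Ioi 0),
      pStar b k g - pStar (Function.update b i (b i - ε)) k g ≤ ε := by
  have hk : (0 : ℝ) < k := by exact_mod_cast hk1
  have hcap : g < 2 * rankWeight k i / k - ((k : ℝ) + 1) / k := by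
    have h := Int.floor_lt.1 hi
    push_cast at h
    rw [rankWeight, lt_sub_iff_add_lt, lt_div_iff₀ hk]
    linarith
  filter_upwards [self_mem_nhdsWithin, nhdsWithin_le_nhds (hmono.eventually_forall_lt_le_sub i),
    nhdsWithin_le_nhds (eventually_le_nhds (hpos i))] with ε hε hbi hεb
  rw [sub_le_iff_le_add']
  refine pStar_le_pStar_add hg.2 (le_of_lt hε) fun p hεp hp =>
    gStar_le_of_exists_flexGini_le hcap hg.2 hp fun a ha hag => ?_
  rw [ha.flexGini_eq hkn, sub_lt_sub_iff_right, div_lt_div_iff_of_pos_right hk] at hag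
  obtain ⟨a', ha', hW⟩ := ha.exists_update_sub (le_of_lt hε) hεp hεb hbi (by linarith)
  refine ⟨a', ha', ?_⟩
  rw [ha'.flexGini_eq hkn, ha.flexGini_eq hkn]
  gcongr
end

section
/- Fix a Gini cap g ∈ (0,1), a finite set K of allowed winner numbers, an agent i with valuation v_i > 0, and the other agents' reported budgets b_{−i} (at least min(K) of which are positive). If p*(0, b_{−i}) ≥ v_i, then reporting a budget of 0 is a best response for agent i: for every report b_i ≥ 0, u_i(b_i, b_{−i}) ≤ 0 = u_i(0, b_{−i}). -/
open Finset

/-!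
Raising a budget only enlarges the set of feasible allocations, so it can only lower each
`g*_k(p)` and hence only raise each `p*_k` and the mechanism price `p*`. Whatever budget `x ≥ 0`
agent `i` reports, she therefore faces a price at least `p*(0, b₋ᵢ) ≥ vᵢ`, and since her share of
the coin is nonnegative her utility is at most `0`; reporting `0` gives her no coin at all.
-/

lemma neg_two_le_gini {k : ℕ} {y : Fin k → ℝ} (hy : ∀ i, 0 ≤ y i) : -2 ≤ gini y := by
  have hquot : 0 ≤ 2 * (∑ i : Fin k, (((i : ℕ) : ℝ) + 1) * y i) / (k * ∑ i, y i) := by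
    have := sum_nonneg fun (i : Fin k) (_ : i ∈ univ) => hy i
    have := sum_nonneg fun (i : Fin k) (_ : i ∈ univ) =>
      mul_nonneg (by positivity : (0 : ℝ) ≤ (i : ℕ) + 1) (hy i)
    positivity
  have hcorr : ((k : ℝ) + 1) / k ≤ 2 := by
    rcases Nat.eq_zero_or_pos k with rfl | hk
    · simp
    · have hk' : (1 : ℝ) ≤ k := by exact_mod_cast hk
      rw [div_le_iff₀ (by positivity)]
      linarith
  unfold gini
  linarith

lemma neg_two_le_flexGini {n : ℕ} (k : ℕ) {a : Fin n → ℝ} (ha : ∀ i, 0 ≤ a i) :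
    -2 ≤ flexGini k a := by
  unfold flexGini
  split
  · exact neg_two_le_gini fun _ => ha _
  · norm_num

section Feasible

variable {n : ℕ} {b b' : Fin n → ℝ} {k : ℕ} {p : ℝ} {a : Fin n → ℝ}

lemma Feasible.mono (h : Feasible b k p a) (hb : b ≤ b') : Feasible b' k p a :=
  ⟨h.1, h.2.1, fun j => (h.2.2.1 j).trans (hb j), h.2.2.2⟩

/-- The price is paid for the whole coin: `p = ∑ⱼ aⱼ p ≤ ∑ⱼ bⱼ`. -/
lemma Feasible.le_sum_budget (h : Feasible b k p a) (hp : 0 < p) : p ≤ ∑ j, b j := by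
  have hshare : 1 ≤ (∑ j, b j) / p := by
    rw [← h.2.1, sum_div]
    exact sum_le_sum fun j _ => (le_div_iff₀ hp).mpr (h.2.2.1 j)
  exact (one_le_div hp).mp hshare

lemma exists_feasible_of_gStar_le {g : ℝ} (hg : g < 1) (h : gStar b k p ≤ g) :
    ∃ a, Feasible b k p a := by
  by_contra hno
  rw [gStar, if_neg hno] at h
  linarith

lemma gStar_le_gStar (hb : b ≤ b') (hfeas : ∃ a, Feasible b k p a) :
    gStar b' k p ≤ gStar b k p := by
  classical
  have hfeas' : ∃ a, Feasible b' k p a := hfeas.imp fun _ h => h.mono hb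
  rw [gStar, gStar, if_pos hfeas, if_pos hfeas']
  refine csInf_le_csInf ?_ ?_ (Set.image_mono fun _ h => Feasible.mono h hb)
  · exact ⟨-2, by rintro _ ⟨a, ha, rfl⟩; exact neg_two_le_flexGini k ha.1⟩
  · obtain ⟨a, ha⟩ := hfeas
    exact ⟨flexGini k a, a, ha, rfl⟩

end Feasible

section Price

variable {n : ℕ} {g : ℝ}

/-- The cap `g < 1` excludes the prices without feasible allocation, where `gStar = 1`; without
it the set can be unbounded and `pStar` the junk value `sSup = 0`. -/
lemma bddAbove_priceSet (b : Fin n → ℝ) (k : ℕ) (hg : g < 1) :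
    BddAbove {p : ℝ | 0 < p ∧ gStar b k p ≤ g} :=
  ⟨∑ j, b j, fun _ ⟨hp, hgp⟩ =>
    (exists_feasible_of_gStar_le hg hgp).choose_spec.le_sum_budget hp⟩

lemma pStar_nonneg (b : Fin n → ℝ) (k : ℕ) : 0 ≤ pStar b k g :=
  Real.sSup_nonneg fun _ hp => hp.1.le

lemma pStarK_nonneg (b : Fin n → ℝ) (K : Finset ℕ) : 0 ≤ pStarK b K g :=
  Real.sSup_nonneg fun _ ⟨k, _, hk⟩ => hk ▸ pStar_nonneg b k

lemma pStar_mono (k : ℕ) (hg : g < 1) : Monotone fun b : Fin n → ℝ => pStar b k g := by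
  intro b b' hb
  refine Real.sSup_le (fun p ⟨hp, hgp⟩ => le_csSup (bddAbove_priceSet b' k hg) ⟨hp, ?_⟩)
    (pStar_nonneg b' k)
  exact (gStar_le_gStar hb (exists_feasible_of_gStar_le hg hgp)).trans hgp

lemma pStarK_mono (K : Finset ℕ) (hg : g < 1) : Monotone fun b : Fin n → ℝ => pStarK b K g := by
  intro b b' hb
  refine Real.sSup_le ?_ (pStarK_nonneg b' K)
  rintro _ ⟨k, hk, rfl⟩
  exact (pStar_mono k hg hb).trans (le_csSup ((K.finite_toSet.image _).bddAbove) ⟨k, hk, rfl⟩)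

end Price

section Allocation

variable {n : ℕ} {b : Fin n → ℝ} {K : Finset ℕ} {g : ℝ} {i : Fin n}

lemma capOf_nonneg (b : Fin n → ℝ) (k : ℕ) (p : ℝ) : 0 ≤ capOf b k p :=
  Real.sInf_nonneg fun _ hC => hC.1.le

lemma mechAlloc_nonneg (hi : 0 ≤ b i) : 0 ≤ mechAlloc b K g i := by
  unfold mechAlloc
  split
  · exact le_rfl
  · exact le_min (div_nonneg hi (pStarK_nonneg b K)) (capOf_nonneg _ _ _)

lemma mechAlloc_eq_zero (hi : b i = 0) : mechAlloc b K g i = 0 := by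
  unfold mechAlloc
  split
  · rfl
  · rw [hi, zero_div, min_eq_left (capOf_nonneg _ _ _)]

lemma util_nonpos {v : ℝ} (hi : 0 ≤ b i) (hv : v ≤ pStarK b K g) : util b K g i v ≤ 0 :=
  mul_nonpos_of_nonneg_of_nonpos (mechAlloc_nonneg hi) (by linarith)

lemma util_eq_zero {v : ℝ} (hi : b i = 0) : util b K g i v = 0 := by
  rw [util, mechAlloc_eq_zero hi, zero_mul]

end Allocation

theorem pullout_best_response_general {n : ℕ} (g : ℝ) (hg : g ∈ Set.Ioo (0 : ℝ) 1)
    (K : Finset ℕ)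
    (i : Fin n) (b : Fin n → ℝ)
    (v : ℝ) (hp : v ≤ pStarK (Function.update b i 0) K g) :
    (∀ x : ℝ, 0 ≤ x → util (Function.update b i x) K g i v ≤ 0) ∧
      util (Function.update b i 0) K g i v = 0 := by
  refine ⟨fun x hx => util_nonpos (by simpa using hx) ?_, util_eq_zero (by simp)⟩
  exact hp.trans (pStarK_mono K hg.2 (update_le_update_iff'.mpr hx))

/-- If `p*(0, b₋ᵢ) ≥ vᵢ`, then reporting a budget of `0` is a best response
for agent `i`: every report yields utility at most `0`, and reporting `0` yields utility `0`. -/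
theorem pullout_best_response {n : ℕ} (g : ℝ) (hg : g ∈ Set.Ioo (0 : ℝ) 1)
    (K : Finset ℕ) (hK : K.Nonempty) (hKn : ∀ k ∈ K, 1 ≤ k ∧ k ≤ n)
    (i : Fin n) (b : Fin n → ℝ) (hnn : ∀ j, 0 ≤ b j)
    (hpos : K.min' hK ≤ (Finset.univ.filter fun j : Fin n => j ≠ i ∧ 0 < b j).card)
    (v : ℝ) (hv : 0 < v) (hp : v ≤ pStarK (Function.update b i 0) K g) :
    (∀ x : ℝ, 0 ≤ x → util (Function.update b i x) K g i v ≤ 0) ∧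
      util (Function.update b i 0) K g i v = 0 :=
  pullout_best_response_general g hg K i b v hp
end
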